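/- Let B be the real 3-by-3 matrix with rows (−2, 1, 0), (−1, 2, 3), (1, −1, 3) and let A = diag(1, x₁, x₂). Then Tr[S_{4,2}(A,B)] = 20 − 4x₁ + 8x₁² − 12x₁x₂ + 42x₂² and Tr[S_{3,2}(A,B)] = 9 + 18x₂ as polynomials in x₁, x₂. Moreover, the minimum of Tr[S_{4,2}(A,B)] over (x₁,x₂) ∈ [0,1]² is achieved at x₁ = 7/25, x₂ = 1/25, and with A' = diag(1, 7/25, 1/25) one has Tr[S_{4,2}(A',B)] = 2·Tr[S_{3,2}(A',B)] = 486/25. -/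

import Mathlib

/-- The `k`-th Hurwitz product `S_{m,k}(A,B)`: the sum of all words of length `m`
in `A` and `B` in which exactly `k` `B`'s appear. -/
noncomputable def hurwitz {R : Type*} [CommRing R] {n : ℕ} (m k : ℕ)
    (A B : Matrix (Fin n) (Fin n) R) : Matrix (Fin n) (Fin n) R :=
  ∑ w ∈ Finset.univ.filter
      (fun w : Fin m → Bool => (Finset.univ.filter (fun i => w i = true)).card = k),
    (List.ofFn (fun i => if w i then B else A)).prod

/-!
Splitting off the first letter of a word gives the Pascal recursion
`S_{m+1,k+1} = A S_{m,k+1} + B S_{m,k}`, so `S_{3,2}` and `S_{4,2}` are explicit sums of words.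
Under the trace a word only matters up to rotation, which leaves
`Tr S_{3,2} = 3 Tr(AB²)` and `Tr S_{4,2} = 4 Tr(A²B²) + 2 Tr(ABAB)`; for the given `A` and `B`
these are the stated polynomials. The quadratic one is `486/25` plus a positive definite form in
`(x₁ - 7/25, x₂ - 1/25)`, hence is minimal at `(7/25, 1/25)`.
-/

open Finset Matrix

theorem Matrix.trace_mul_mul_mul_cycle {ι κ μ ν S : Type*} [Fintype ι] [Fintype κ] [Fintype μ]
    [Fintype ν] [NonUnitalCommSemiring S] (P : Matrix ι κ S) (Q : Matrix κ μ S)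
    (U : Matrix μ ν S) (V : Matrix ν ι S) :
    (P * Q * U * V).trace = (Q * U * V * P).trace := by
  rw [← trace_mul_comm P (Q * U * V)]
  simp only [Matrix.mul_assoc]

section

variable {R : Type*} [CommRing R] {n : ℕ} (A B : Matrix (Fin n) (Fin n) R)

theorem hurwitz_succ (m k : ℕ) :
    hurwitz (m + 1) k A B =
      A * hurwitz m k A B +
        B * ∑ w ∈ univ.filter (fun w : Fin m → Bool => #{i | w i = true} + 1 = k),
          (List.ofFn (fun i => if w i then B else A)).prod := by
  have card_cons (b : Bool) (w : Fin m → Bool) :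
      #{i | (Fin.cons b w : Fin (m + 1) → Bool) i = true} =
        (if b then 1 else 0) + #{i | w i = true} := by
    simp only [card_filter, Fin.sum_univ_succ, Fin.cons_zero, Fin.cons_succ]
  simp only [hurwitz, sum_filter, mul_sum, mul_ite, mul_zero]
  rw [← (Fin.consEquiv fun _ => Bool).sum_comp, Fintype.sum_prod_type, Fintype.sum_bool, add_comm]
  simp [card_cons, List.ofFn_succ, add_comm]

theorem hurwitz_zero_zero : hurwitz 0 0 A B = 1 := by
  simp [hurwitz]

theorem hurwitz_zero_succ (k : ℕ) : hurwitz 0 (k + 1) A B = 0 := by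
  simp [hurwitz]

theorem hurwitz_succ_zero (m : ℕ) : hurwitz (m + 1) 0 A B = A * hurwitz m 0 A B := by
  simp [hurwitz_succ]

theorem hurwitz_succ_succ (m k : ℕ) :
    hurwitz (m + 1) (k + 1) A B = A * hurwitz m (k + 1) A B + B * hurwitz m k A B := by
  simp only [hurwitz_succ, Nat.add_right_cancel_iff]
  rfl

theorem trace_hurwitz_three_two : (hurwitz 3 2 A B).trace = 3 * (A * B * B).trace := by
  simp only [hurwitz_succ_succ, hurwitz_succ_zero, hurwitz_zero_succ, hurwitz_zero_zero,
    mul_zero, mul_one, zero_add, add_zero, mul_add, trace_add, ← Matrix.mul_assoc]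
  rw [trace_mul_cycle B A B, trace_mul_cycle B B A]
  ring

theorem trace_hurwitz_four_two :
    (hurwitz 4 2 A B).trace = 4 * (A * A * B * B).trace + 2 * (A * B * A * B).trace := by
  simp only [hurwitz_succ_succ, hurwitz_succ_zero, hurwitz_zero_succ, hurwitz_zero_zero,
    mul_zero, mul_one, zero_add, add_zero, mul_add, trace_add, ← Matrix.mul_assoc]
  rw [trace_mul_mul_mul_cycle B B A A, trace_mul_mul_mul_cycle B A A B,
    trace_mul_mul_mul_cycle B A B A, ← trace_mul_mul_mul_cycle A A B B]
  ring

end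

theorem trace_hurwitz_four_two_example (x₁ x₂ : ℝ) :
    (hurwitz 4 2 (diagonal ![1, x₁, x₂]) !![-2, 1, 0; -1, 2, 3; 1, -1, 3]).trace =
      20 - 4 * x₁ + 8 * x₁ ^ 2 - 12 * x₁ * x₂ + 42 * x₂ ^ 2 := by
  rw [trace_hurwitz_four_two, diagonal_fin_three]
  simp only [mul_fin_three, trace_fin_three, of_apply, cons_val', cons_val_zero, cons_val_one,
    cons_val_two, vecHead, vecTail, Function.comp_apply, Fin.succ_zero_eq_one, cons_val_fin_one]
  ring

theorem trace_hurwitz_three_two_example (x₁ x₂ : ℝ) :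
    (hurwitz 3 2 (diagonal ![1, x₁, x₂]) !![-2, 1, 0; -1, 2, 3; 1, -1, 3]).trace =
      9 + 18 * x₂ := by
  rw [trace_hurwitz_three_two, diagonal_fin_three]
  simp only [mul_fin_three, trace_fin_three, of_apply, cons_val', cons_val_zero, cons_val_one,
    cons_val_two, vecHead, vecTail, Function.comp_apply, Fin.succ_zero_eq_one, cons_val_fin_one]
  ring

theorem example_quadratic_eq_add_sq (x₁ x₂ : ℝ) :
    20 - 4 * x₁ + 8 * x₁ ^ 2 - 12 * x₁ * x₂ + 42 * x₂ ^ 2 =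
      486 / 25 + (4 * (x₁ - 7 / 25) - 3 * (x₂ - 1 / 25)) ^ 2 / 2 + 75 / 2 * (x₂ - 1 / 25) ^ 2 := by
  ring

theorem hurwitz_example (B : Matrix (Fin 3) (Fin 3) ℝ)
    (hB : B = !![-2, 1, 0; -1, 2, 3; 1, -1, 3])
    (A' : Matrix (Fin 3) (Fin 3) ℝ)
    (hA' : A' = Matrix.diagonal ![1, 7 / 25, 1 / 25]) :
    (∀ x₁ x₂ : ℝ,
        Matrix.trace (hurwitz 4 2 (Matrix.diagonal ![1, x₁, x₂]) B) =
          20 - 4 * x₁ + 8 * x₁ ^ 2 - 12 * x₁ * x₂ + 42 * x₂ ^ 2) ∧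
      (∀ x₁ x₂ : ℝ,
        Matrix.trace (hurwitz 3 2 (Matrix.diagonal ![1, x₁, x₂]) B) =
          9 + 18 * x₂) ∧
      (∀ x₁ x₂ : ℝ, x₁ ∈ Set.Icc (0 : ℝ) 1 → x₂ ∈ Set.Icc (0 : ℝ) 1 →
        Matrix.trace (hurwitz 4 2 A' B) ≤
          Matrix.trace (hurwitz 4 2 (Matrix.diagonal ![1, x₁, x₂]) B)) ∧
      Matrix.trace (hurwitz 4 2 A' B) = 486 / 25 ∧
      Matrix.trace (hurwitz 4 2 A' B) = 2 * Matrix.trace (hurwitz 3 2 A' B) := by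
  subst hB hA'
  have min_value := trace_hurwitz_four_two_example (7 / 25) (1 / 25)
  norm_num at min_value
  refine ⟨trace_hurwitz_four_two_example, trace_hurwitz_three_two_example, ?_, min_value, ?_⟩
  · intro x₁ x₂ _ _
    rw [min_value, trace_hurwitz_four_two_example, example_quadratic_eq_add_sq]
    linarith [sq_nonneg (4 * (x₁ - 7 / 25) - 3 * (x₂ - 1 / 25)), sq_nonneg (x₂ - 1 / 25)]
  · rw [min_value, trace_hurwitz_three_two_example]
    norm_num
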